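/- Identification of the generalized local average controlled direct effect with peer treatment fixed at 0 (Theorem 3.1, item 2, d = 0): let 0 ≤ p₀ < p₀' ≤ 1 and 0 ≤ p₁ ≤ 1 with ℙ(p₀ < V₀ ≤ p₀' and V₁ > p₁) > 0. Then (p₀' − p₀) − (C(p₀',p₁) − C(p₀,p₁)) = ℙ(p₀ < V₀ ≤ p₀' and V₁ > p₁), and (G⁰(p₀',p₁) − G⁰(p₀,p₁)) / ((p₀' − p₀) − (C(p₀',p₁) − C(p₀,p₁))) = 𝔼[ m(1,0,U) − m(0,0,U) | p₀ < V₀ ≤ p₀' and V₁ > p₁ ], the local average controlled direct effect LACDE^{(0)} for the subpopulation {p₀ < V₀ ≤ p₀', V₁ > p₁}. -/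
import Mathlib


open MeasureTheory ProbabilityTheory

/-- Identification of the generalized local average controlled direct effect with peer
treatment fixed at 0 (Theorem 3.1, item 2, d = 0). -/
theorem lacde_zero_identification
    {Ω 𝒰 : Type*} [MeasurableSpace Ω] [MeasurableSpace 𝒰]
    (μ : Measure Ω) [IsProbabilityMeasure μ]
    (U : Ω → 𝒰) (V₀ V₁ : Ω → ℝ)
    (hU : Measurable U) (hV₀ : Measurable V₀) (hV₁ : Measurable V₁)
    -- V₀, V₁ uniformly distributed on (0,1)
    (hV₀unif : Measure.map V₀ μ = volume.restrict (Set.Ioo (0:ℝ) 1))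
    (hV₁unif : Measure.map V₁ μ = volume.restrict (Set.Ioo (0:ℝ) 1))
    -- bounded measurable outcome function (`true` codes treatment 1, `false` codes 0)
    (m : Bool → Bool → 𝒰 → ℝ) (hm : ∀ d d', Measurable (m d d'))
    (hm_bdd : ∃ B, ∀ d d' u, |m d d' u| ≤ B)
    -- the copula of (V₀, V₁)
    (C : ℝ → ℝ → ℝ)
    (hC : ∀ p q, C p q = (μ {ω | V₀ ω ≤ p ∧ V₁ ω ≤ q}).toReal)
    -- identified conditional-mean function G⁰
    (G0 : ℝ → ℝ → ℝ)
    (hG0 : ∀ p q, G0 p q =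
      (∫ ω, m true false (U ω) * (if V₀ ω ≤ p then (1:ℝ) else 0)
        * (if q < V₁ ω then (1:ℝ) else 0) ∂μ)
      + ∫ ω, m false false (U ω) * (if p < V₀ ω then (1:ℝ) else 0)
        * (if q < V₁ ω then (1:ℝ) else 0) ∂μ)
    -- the propensity-score values
    (p₀ p₀' p₁ : ℝ) (hp₀0 : 0 ≤ p₀) (hp₀lt : p₀ < p₀') (hp₀'1 : p₀' ≤ 1)
    (hp₁0 : 0 ≤ p₁) (hp₁1 : p₁ ≤ 1)
    -- the conditioning subpopulation {p₀ < V₀ ≤ p₀', V₁ > p₁} has positive probability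
    (E : Set Ω) (hE : E = {ω | p₀ < V₀ ω ∧ V₀ ω ≤ p₀' ∧ p₁ < V₁ ω})
    (hEpos : 0 < μ E) :
    (p₀' - p₀) - (C p₀' p₁ - C p₀ p₁) = (μ E).toReal ∧
    (G0 p₀' p₁ - G0 p₀ p₁) / ((p₀' - p₀) - (C p₀' p₁ - C p₀ p₁))
      = (∫ ω in E, (m true false (U ω) - m false false (U ω)) ∂μ) / (μ E).toReal := by
  classical
  -- basic facts
  have hΩ : Nonempty Ω := by
    by_contra h
    rw [not_nonempty_iff] at h
    have h1 : μ Set.univ = 1 := measure_univ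
    rw [Set.univ_eq_empty_iff.mpr h] at h1
    simp at h1
  obtain ⟨B, hB⟩ := hm_bdd
  have hB0 : 0 ≤ B := le_trans (abs_nonneg _) (hB true true (U (Classical.choice hΩ)))
  -- uniform distribution computation
  have hS : ∀ p : ℝ, 0 ≤ p → p ≤ 1 → μ (V₀ ⁻¹' Set.Iic p) = ENNReal.ofReal p := by
    intro p h0 h1
    have hmap : μ (V₀ ⁻¹' Set.Iic p) = Measure.map V₀ μ (Set.Iic p) :=
      (Measure.map_apply hV₀ measurableSet_Iic).symm
    rw [hmap, hV₀unif, Measure.restrict_apply measurableSet_Iic]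
    apply le_antisymm
    · calc volume (Set.Iic p ∩ Set.Ioo 0 1) ≤ volume (Set.Ioc 0 p) := by
            apply measure_mono; rintro x ⟨hx1, hx2, hx3⟩; exact ⟨hx2, hx1⟩
        _ = ENNReal.ofReal p := by rw [Real.volume_Ioc, sub_zero]
    · calc ENNReal.ofReal p = volume (Set.Ioo 0 p) := by rw [Real.volume_Ioo, sub_zero]
        _ ≤ volume (Set.Iic p ∩ Set.Ioo 0 1) := by
            apply measure_mono; rintro x ⟨hx1, hx2⟩
            exact ⟨hx2.le, hx1, lt_of_lt_of_le hx2 h1⟩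
  set A : Set Ω := V₀ ⁻¹' Set.Ioc p₀ p₀' with hAdef
  set T : Set Ω := V₁ ⁻¹' Set.Iic p₁ with hTdef
  have hAm : MeasurableSet A := hV₀ measurableSet_Ioc
  have hTm : MeasurableSet T := hV₁ measurableSet_Iic
  have hEA : E = A \ T := by
    rw [hE]; ext ω
    simp only [hAdef, hTdef, Set.mem_diff, Set.mem_preimage, Set.mem_Ioc, Set.mem_Iic,
      Set.mem_setOf_eq, not_le]
    tauto
  have hEmeas : MeasurableSet E := hEA ▸ (hAm.diff hTm)
  have hsetU : V₀ ⁻¹' Set.Iic p₀' = V₀ ⁻¹' Set.Iic p₀ ∪ A := by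
    ext ω
    simp only [Set.mem_preimage, Set.mem_Iic, Set.mem_union, Set.mem_Ioc, hAdef]
    constructor
    · intro h
      by_cases h' : V₀ ω ≤ p₀
      · exact Or.inl h'
      · exact Or.inr ⟨not_le.mp h', h⟩
    · rintro (h | ⟨_, h⟩)
      · exact le_trans h hp₀lt.le
      · exact h
  have hdisj : Disjoint (V₀ ⁻¹' Set.Iic p₀) A := by
    rw [Set.disjoint_left]
    rintro ω hω ⟨h1, h2⟩
    exact absurd hω (not_le.mpr h1)
  have hsplit1 : μ (V₀ ⁻¹' Set.Iic p₀') = μ (V₀ ⁻¹' Set.Iic p₀) + μ A := by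
    rw [hsetU, measure_union hdisj hAm]
  have hsplit2 : μ (V₀ ⁻¹' Set.Iic p₀' ∩ T) = μ (V₀ ⁻¹' Set.Iic p₀ ∩ T) + μ (A ∩ T) := by
    rw [hsetU, Set.union_inter_distrib_right,
      measure_union (hdisj.mono Set.inter_subset_left Set.inter_subset_left) (hAm.inter hTm)]
  have hsplit3 : μ A = μ (A ∩ T) + μ (A \ T) := (measure_inter_add_diff A hTm).symm
  have hfin : ∀ s : Set Ω, μ s ≠ ⊤ := fun s => measure_ne_top μ s
  -- translate to real numbers
  have hS0 : (μ (V₀ ⁻¹' Set.Iic p₀)).toReal = p₀ := by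
    rw [hS p₀ hp₀0 (le_trans hp₀lt.le hp₀'1)]; exact ENNReal.toReal_ofReal hp₀0
  have hS0' : (μ (V₀ ⁻¹' Set.Iic p₀')).toReal = p₀' := by
    rw [hS p₀' (le_trans hp₀0 hp₀lt.le) hp₀'1]
    exact ENNReal.toReal_ofReal (le_trans hp₀0 hp₀lt.le)
  have h1r : p₀' = p₀ + (μ A).toReal := by
    rw [← hS0, ← hS0', hsplit1, ENNReal.toReal_add (hfin _) (hfin _)]
  have hCset : ∀ p : ℝ, {ω | V₀ ω ≤ p ∧ V₁ ω ≤ p₁} = V₀ ⁻¹' Set.Iic p ∩ T := by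
    intro p; rfl
  have h2r : C p₀' p₁ = C p₀ p₁ + (μ (A ∩ T)).toReal := by
    rw [hC, hC, hCset, hCset, hsplit2, ENNReal.toReal_add (hfin _) (hfin _)]
  have h3r : (μ A).toReal = (μ (A ∩ T)).toReal + (μ (A \ T)).toReal := by
    rw [← ENNReal.toReal_add (hfin _) (hfin _), ← hsplit3]
  have part1 : (p₀' - p₀) - (C p₀' p₁ - C p₀ p₁) = (μ E).toReal := by
    rw [hEA]; linarith
  refine ⟨part1, ?_⟩
  -- Part 2: the numerator
  have hmeas_ind : ∀ (b : Bool) (s : Set Ω), MeasurableSet s →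
      Measurable (fun ω => m b false (U ω) * (if ω ∈ s then (1:ℝ) else 0)
        * (if p₁ < V₁ ω then (1:ℝ) else 0)) := by
    intro b s hs
    exact (((hm b false).comp hU).mul
      (Measurable.ite hs measurable_const measurable_const)).mul
      (Measurable.ite (measurableSet_lt measurable_const hV₁) measurable_const measurable_const)
  have hint : ∀ (b : Bool) (s : Set Ω), MeasurableSet s →
      Integrable (fun ω => m b false (U ω) * (if ω ∈ s then (1:ℝ) else 0)
        * (if p₁ < V₁ ω then (1:ℝ) else 0)) μ := by
    intro b s hs
    refine Integrable.mono' (integrable_const B) (hmeas_ind b s hs).aestronglyMeasurable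
      (Filter.Eventually.of_forall fun ω => ?_)
    rw [Real.norm_eq_abs, abs_mul, abs_mul]
    split_ifs <;> simp only [abs_one, abs_zero, mul_one, mul_zero] <;>
      first | exact hB b false (U ω) | exact hB0
  have hle_mem : ∀ (p : ℝ) (ω : Ω), (V₀ ω ≤ p) = (ω ∈ V₀ ⁻¹' Set.Iic p) := fun p ω => rfl
  have hlt_mem : ∀ (p : ℝ) (ω : Ω), (p < V₀ ω) = (ω ∈ V₀ ⁻¹' Set.Ioi p) := fun p ω => rfl
  have hint1 : ∀ p : ℝ, Integrable (fun ω => m true false (U ω) * (if V₀ ω ≤ p then (1:ℝ) else 0)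
      * (if p₁ < V₁ ω then (1:ℝ) else 0)) μ := by
    intro p
    simpa only [← hle_mem] using hint true (V₀ ⁻¹' Set.Iic p) (hV₀ measurableSet_Iic)
  have hint0 : ∀ p : ℝ, Integrable (fun ω => m false false (U ω) * (if p < V₀ ω then (1:ℝ) else 0)
      * (if p₁ < V₁ ω then (1:ℝ) else 0)) μ := by
    intro p
    simpa only [← hlt_mem] using hint false (V₀ ⁻¹' Set.Ioi p) (hV₀ measurableSet_Ioi)
  have key : ∀ ω, (m true false (U ω) * (if V₀ ω ≤ p₀' then (1:ℝ) else 0)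
        * (if p₁ < V₁ ω then (1:ℝ) else 0)
      + m false false (U ω) * (if p₀' < V₀ ω then (1:ℝ) else 0)
        * (if p₁ < V₁ ω then (1:ℝ) else 0))
      - (m true false (U ω) * (if V₀ ω ≤ p₀ then (1:ℝ) else 0)
        * (if p₁ < V₁ ω then (1:ℝ) else 0)
      + m false false (U ω) * (if p₀ < V₀ ω then (1:ℝ) else 0)
        * (if p₁ < V₁ ω then (1:ℝ) else 0))
      = E.indicator (fun ω => m true false (U ω) - m false false (U ω)) ω := by
    intro ω
    rw [hE, Set.indicator_apply]
    simp only [Set.mem_setOf_eq]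
    by_cases h1 : p₁ < V₁ ω
    · rcases le_or_gt (V₀ ω) p₀ with h0 | h0
      · have h0' : V₀ ω ≤ p₀' := h0.trans hp₀lt.le
        simp [h1, h0, h0', not_lt.mpr h0, not_lt.mpr h0']
      · rcases le_or_gt (V₀ ω) p₀' with h0' | h0'
        · simp only [h1, h0, h0', not_le.mpr h0, not_lt.mpr h0', if_true, if_false, and_true,
            true_and, if_pos (And.intro h0 (And.intro h0' h1))]
          ring
        · have hn : ¬ V₀ ω ≤ p₀ := not_le.mpr (hp₀lt.trans h0')
          have hn' : ¬ V₀ ω ≤ p₀' := not_le.mpr h0'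
          simp [h1, h0, h0', hn, hn']
    · simp [h1]
  have hsum' : G0 p₀' p₁ = ∫ ω, ((m true false (U ω) * if V₀ ω ≤ p₀' then (1:ℝ) else 0) * (if p₁ < V₁ ω then (1:ℝ) else 0)
      + (m false false (U ω) * if p₀' < V₀ ω then (1:ℝ) else 0) * (if p₁ < V₁ ω then (1:ℝ) else 0)) ∂μ := by
    rw [hG0]; exact (integral_add (hint1 p₀') (hint0 p₀')).symm
  have hsum : G0 p₀ p₁ = ∫ ω, ((m true false (U ω) * if V₀ ω ≤ p₀ then (1:ℝ) else 0) * (if p₁ < V₁ ω then (1:ℝ) else 0)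
      + (m false false (U ω) * if p₀ < V₀ ω then (1:ℝ) else 0) * (if p₁ < V₁ ω then (1:ℝ) else 0)) ∂μ := by
    rw [hG0]; exact (integral_add (hint1 p₀) (hint0 p₀)).symm
  have hdiff : G0 p₀' p₁ - G0 p₀ p₁ = ∫ ω, (((m true false (U ω) * if V₀ ω ≤ p₀' then (1:ℝ) else 0) * (if p₁ < V₁ ω then (1:ℝ) else 0)
      + (m false false (U ω) * if p₀' < V₀ ω then (1:ℝ) else 0) * (if p₁ < V₁ ω then (1:ℝ) else 0))
      - ((m true false (U ω) * if V₀ ω ≤ p₀ then (1:ℝ) else 0) * (if p₁ < V₁ ω then (1:ℝ) else 0)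
      + (m false false (U ω) * if p₀ < V₀ ω then (1:ℝ) else 0) * (if p₁ < V₁ ω then (1:ℝ) else 0))) ∂μ := by
    rw [hsum', hsum]
    exact (integral_sub ((hint1 p₀').add (hint0 p₀')) ((hint1 p₀).add (hint0 p₀))).symm
  have hfun : (fun ω => (((m true false (U ω) * if V₀ ω ≤ p₀' then (1:ℝ) else 0) * (if p₁ < V₁ ω then (1:ℝ) else 0)
      + (m false false (U ω) * if p₀' < V₀ ω then (1:ℝ) else 0) * (if p₁ < V₁ ω then (1:ℝ) else 0))
      - ((m true false (U ω) * if V₀ ω ≤ p₀ then (1:ℝ) else 0) * (if p₁ < V₁ ω then (1:ℝ) else 0)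
      + (m false false (U ω) * if p₀ < V₀ ω then (1:ℝ) else 0) * (if p₁ < V₁ ω then (1:ℝ) else 0))))
      = E.indicator (fun ω => m true false (U ω) - m false false (U ω)) := funext key
  rw [hdiff, hfun, integral_indicator hEmeas, part1]
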